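/- arXiv:2002.07262 — 3 statements merged into one kernel-verified Lean document; each statement's English description precedes it below -/
import Mathlib

section
/- Let D and E be preorders and U a complete lattice. Let c : E →o D be monotone and let M : (D →o U) →o (E →o U) be a monotone map between the pointwise-ordered sets of monotone functions. Define Q : (D →o U) → (D →o U) by (Q g)(x) = ⨆ { (M g)(z) | z : E, c z ≤ x }. Then: (i) for every monotone g : D →o U, the function Q g is monotone from D to U; (ii) Q is a monotone operator on the complete lattice D →o U and hence has a least fixed point f; and (iii) this least fixed point satisfies the lax initiality condition f (c z) ≥ (M f)(z) for every z : E. -/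
theorem stmt_0 {D E U : Type*} [Preorder D] [Preorder E] [CompleteLattice U]
    (c : E →o D) (M : (D →o U) →o (E →o U)) :
    -- (i) for every monotone g, Q g is monotone
    (∀ g : D →o U, Monotone fun x : D => ⨆ z ∈ {z : E | c z ≤ x}, (M g) z) ∧
    -- (ii) Q can be bundled as a monotone operator on the complete lattice D →o U,
    -- and (iii) its least fixed point f satisfies f (c z) ≥ (M f) z for all z
    (∃ Q : (D →o U) →o (D →o U),
      (∀ (g : D →o U) (x : D), Q g x = ⨆ z ∈ {z : E | c z ≤ x}, (M g) z) ∧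
      ∃ f : D →o U,
        Q f = f ∧
        (∀ g : D →o U, Q g = g → f ≤ g) ∧
        (∀ z : E, (M f) z ≤ f (c z))) := by
  have hmono : ∀ g : D →o U, Monotone fun x : D => ⨆ z ∈ {z : E | c z ≤ x}, (M g) z := by
    intro g x y hxy
    exact iSup_le fun z => iSup_le fun hz => le_iSup_of_le z (le_iSup_of_le (hz.trans hxy) le_rfl)
  refine ⟨hmono, ?_⟩
  set Q : (D →o U) →o (D →o U) :=
    ⟨fun g => ⟨fun x => ⨆ z ∈ {z : E | c z ≤ x}, (M g) z, hmono g⟩,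
      by
        intro g h hgh x
        exact iSup_le fun z => iSup_le fun hz =>
          le_iSup_of_le z (le_iSup_of_le hz (M.mono hgh z))⟩ with hQ
  refine ⟨Q, fun g x => rfl, OrderHom.lfp Q, OrderHom.map_lfp Q, ?_, ?_⟩
  · intro g hg
    exact OrderHom.lfp_le Q hg.le
  · intro z
    have := congrFun (congrArg DFunLike.coe (OrderHom.map_lfp Q)) (c z)
    rw [← this]
    exact le_iSup_of_le z (le_iSup_of_le (le_refl (c z)) le_rfl)
end

section
/- Fix a preorder α, let ℕ∞ = WithTop ℕ and ℕ₁∞ = {n : ℕ∞ // 1 ≤ n}, and consider lower sets of the preorder PUnit ⊕ (α × ℕ₁∞). Define size X = ⨆ { (n : ℕ∞) | ∃ a : α, Sum.inr (a, n) ∈ X }, the list constructor Cons X = 1 + size X (an element of ℕ₁∞), and the destructor Dest x = sSup { X : LowerSet (PUnit ⊕ (α × ℕ₁∞)) | Cons X ≤ x } for x : ℕ₁∞, the supremum being union of lower sets. Then for every x : ℕ₁∞, Dest x equals, as a subset of PUnit ⊕ (α × ℕ₁∞), the set { Sum.inl u | u : PUnit } ∪ { Sum.inr (a, n) | a : α,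 n : ℕ₁∞, 1 + (n : ℕ∞) ≤ (x : ℕ∞) }. In particular Dest 1 consists exactly of the element Sum.inl PUnit.unit. -/
/-!
Since `1` is cancellable in `ℕ∞` and `1 ≤ x`, the bound `1 + ⨆ n ≤ x` holds iff `1 + n ≤ x` for
every tail size `n`. Hence `Cons X ≤ x` says exactly that `X` lies below the explicit lower set
of nil and all conses with tails of size at most `x - 1`, and `Dest x`, the supremum of all such
`X`, is that lower set.
-/

/-- `ℕ₁∞`: extended naturals that are at least 1 (sizes of inductive values). -/
abbrev Nat1Inf : Type := {n : WithTop ℕ // 1 ≤ n}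

/-- The size of the data from which a list is constructed: the supremum of the
sizes of the tails occurring in the lower set `X`. -/
noncomputable def listSize {α : Type*} [Preorder α]
    (X : LowerSet (PUnit ⊕ (α × Nat1Inf))) : WithTop ℕ :=
  ⨆ n ∈ {n : Nat1Inf | ∃ a : α, Sum.inr (a, n) ∈ X}, (n : WithTop ℕ)

/-- The semantic list constructor in the constructor-counting model. -/
noncomputable def listCons {α : Type*} [Preorder α]
    (X : LowerSet (PUnit ⊕ (α × Nat1Inf))) : Nat1Inf :=
  ⟨1 + listSize X, le_add_of_nonneg_right zero_le⟩

/-- The semantic list destructor in the constructor-counting model. -/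
noncomputable def listDest {α : Type*} [Preorder α] (x : Nat1Inf) :
    LowerSet (PUnit ⊕ (α × Nat1Inf)) :=
  sSup {X : LowerSet (PUnit ⊕ (α × Nat1Inf)) | listCons X ≤ x}

def listDestExplicit {α : Type*} [Preorder α] (x : Nat1Inf) :
    LowerSet (PUnit ⊕ (α × Nat1Inf)) where
  carrier := {s | ∃ u : PUnit, s = Sum.inl u} ∪
    {s | ∃ (a : α) (n : Nat1Inf), s = Sum.inr (a, n) ∧ 1 + (n : WithTop ℕ) ≤ (x : WithTop ℕ)}
  lower' := by
    rintro s t hts hs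
    rcases t with v | ⟨b, m⟩
    · exact Or.inl ⟨v, rfl⟩
    · obtain ⟨u, rfl⟩ | ⟨a, n, rfl, hn⟩ := hs
      · exact absurd hts Sum.not_inr_le_inl
      · have hmn : (m : WithTop ℕ) ≤ n := (Sum.inr_le_inr_iff.mp hts).2
        exact Or.inr ⟨b, m, rfl, le_trans (by gcongr) hn⟩

section

variable {α : Type*} [Preorder α]

theorem listCons_le_iff {X : LowerSet (PUnit ⊕ (α × Nat1Inf))} {x : Nat1Inf} :
    listCons X ≤ x ↔ ∀ a n, Sum.inr (a, n) ∈ X → 1 + (n : WithTop ℕ) ≤ x := by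
  have hcancel : AddLECancellable (1 : WithTop ℕ) :=
    WithTop.addLECancellable_of_ne_top WithTop.one_ne_top
  change 1 + listSize X ≤ (x : WithTop ℕ) ↔ _
  simp_rw [← hcancel.le_tsub_iff_left x.2, listSize, iSup₂_le_iff]
  exact ⟨fun h a n hn => h n ⟨a, hn⟩, fun h n ⟨a, hn⟩ => h a n hn⟩

theorem le_listDestExplicit_iff {X : LowerSet (PUnit ⊕ (α × Nat1Inf))} {x : Nat1Inf} :
    X ≤ listDestExplicit x ↔ ∀ a n, Sum.inr (a, n) ∈ X → 1 + (n : WithTop ℕ) ≤ x := by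
  refine ⟨fun h a n hn => ?_, fun h s hs => ?_⟩
  · obtain ⟨u, hu⟩ | ⟨b, m, hbm, hm⟩ := h hn
    · exact absurd hu Sum.inr_ne_inl
    · obtain ⟨rfl, rfl⟩ := Prod.ext_iff.mp (Sum.inr_injective hbm)
      exact hm
  · rcases s with u | ⟨a, n⟩
    · exact Or.inl ⟨u, rfl⟩
    · exact Or.inr ⟨a, n, rfl, h a n hs⟩

theorem listDest_eq_listDestExplicit (x : Nat1Inf) :
    listDest (α := α) x = listDestExplicit x := by
  have hcons : {X | listCons X ≤ x} = Set.Iic (listDestExplicit (α := α) x) := by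
    ext X
    exact listCons_le_iff.trans le_listDestExplicit_iff.symm
  rw [listDest, hcons, csSup_Iic]

end

theorem stmt_9 {α : Type*} [Preorder α] :
    (∀ x : Nat1Inf,
      (listDest (α := α) x : Set (PUnit ⊕ (α × Nat1Inf))) =
        {s | ∃ u : PUnit, s = Sum.inl u} ∪
        {s | ∃ (a : α) (n : Nat1Inf),
          s = Sum.inr (a, n) ∧ 1 + (n : WithTop ℕ) ≤ (x : WithTop ℕ)}) ∧
    (listDest (α := α) ⟨1, le_refl 1⟩ : Set (PUnit ⊕ (α × Nat1Inf))) =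
      {Sum.inl PUnit.unit} := by
  refine ⟨fun x => congrArg SetLike.coe (listDest_eq_listDestExplicit x), ?_⟩
  rw [listDest_eq_listDestExplicit]
  ext s
  refine ⟨?_, fun hs => Or.inl ⟨PUnit.unit, hs⟩⟩
  rintro (⟨⟨⟩, rfl⟩ | ⟨a, n, rfl, hn⟩)
  · rfl
  · have : (1 : WithTop ℕ) + 1 ≤ 1 := le_trans (by gcongr; exact n.2) hn
    exact absurd this (by norm_num)
end

section
/- Fix a preorder α, let ℕ∞ = WithTop ℕ and ℕ₁∞ = {n : ℕ∞ // 1 ≤ n}, and consider lower sets of the preorder PUnit ⊕ (α × ℕ₁∞ × ℕ₁∞). Define size X = ⨆ { (n₀ : ℕ∞) + (n₁ : ℕ∞) | ∃ a : α, Sum.inr (a, n₀, n₁) ∈ X }, the tree constructor Cons X = 1 + size X ∈ ℕ₁∞, and the destructor Dest x = sSup { X | Cons X ≤ x } for x : ℕ₁∞, suprema of lower sets being unions. Then for every x : ℕ₁∞, Dest x equals, as a subset of PUnit ⊕ (α × ℕ₁∞ × ℕ₁∞), the set { Sum.inl u | u : PUnit } ∪ { Sum.inr (a, n₀, n₁)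 | a : α, 1 + (n₀ : ℕ∞) + (n₁ : ℕ∞) ≤ (x : ℕ∞) }. -/
/-- The size of the data from which a binary tree is constructed: the supremum
of the sums of the sizes of the two subtrees occurring in the lower set `X`. -/
noncomputable def treeSize {α : Type*} [Preorder α]
    (X : LowerSet (PUnit ⊕ (α × Nat1Inf × Nat1Inf))) : WithTop ℕ :=
  ⨆ p ∈ {p : Nat1Inf × Nat1Inf | ∃ a : α, Sum.inr (a, p.1, p.2) ∈ X},
    ((p.1 : WithTop ℕ) + (p.2 : WithTop ℕ))

/-- The semantic tree constructor in the constructor-size-counting model. -/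
noncomputable def treeCons {α : Type*} [Preorder α]
    (X : LowerSet (PUnit ⊕ (α × Nat1Inf × Nat1Inf))) : Nat1Inf :=
  ⟨1 + treeSize X, le_add_of_nonneg_right zero_le⟩

/-- The semantic tree destructor in the constructor-size-counting model. -/
noncomputable def treeDest {α : Type*} [Preorder α] (x : Nat1Inf) :
    LowerSet (PUnit ⊕ (α × Nat1Inf × Nat1Inf)) :=
  sSup {X : LowerSet (PUnit ⊕ (α × Nat1Inf × Nat1Inf)) | treeCons X ≤ x}

/-! Since `treeCons` is monotone, `s` lies in the union `treeDest x` exactly when the principal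
lower set `Iic s` does, i.e. when `treeCons (Iic s) ≤ x`; and the size of a principal lower set is
read off its generator: `0` for a leaf, `n₀ + n₁` for a node. -/

section

variable {α : Type*} [Preorder α]

theorem treeSize_le_iff {X : LowerSet (PUnit ⊕ (α × Nat1Inf × Nat1Inf))} {n : WithTop ℕ} :
    treeSize X ≤ n ↔
      ∀ (a : α) (n₀ n₁ : Nat1Inf), Sum.inr (a, n₀, n₁) ∈ X → (n₀ : WithTop ℕ) + n₁ ≤ n := by
  simp only [treeSize, iSup₂_le_iff, Set.mem_ofPred_eq, Prod.forall, forall_exists_index]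
  exact ⟨fun h a n₀ n₁ hX => h n₀ n₁ a hX, fun h n₀ n₁ a hX => h a n₀ n₁ hX⟩

theorem add_le_treeSize {X : LowerSet (PUnit ⊕ (α × Nat1Inf × Nat1Inf))} {a : α}
    {n₀ n₁ : Nat1Inf} (h : Sum.inr (a, n₀, n₁) ∈ X) : (n₀ : WithTop ℕ) + n₁ ≤ treeSize X :=
  le_iSup₂_of_le (f := fun (p : Nat1Inf × Nat1Inf) _ => (p.1 : WithTop ℕ) + p.2)
    (n₀, n₁) ⟨a, h⟩ le_rfl

theorem treeSize_mono : Monotone (treeSize (α := α)) := fun _ _ hXY =>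
  treeSize_le_iff.2 fun _ _ _ h => add_le_treeSize (hXY h)

theorem treeCons_mono : Monotone (treeCons (α := α)) := fun _ _ hXY =>
  Subtype.coe_le_coe.1 (add_le_add_right (treeSize_mono hXY) 1)

theorem treeSize_Iic_inl (u : PUnit) :
    treeSize (LowerSet.Iic (Sum.inl u : PUnit ⊕ (α × Nat1Inf × Nat1Inf))) = 0 :=
  le_antisymm (treeSize_le_iff.2 fun _ _ _ h => by simp at h) bot_le

theorem treeSize_Iic_inr (a : α) (n₀ n₁ : Nat1Inf) :
    treeSize (LowerSet.Iic (Sum.inr (a, n₀, n₁) : PUnit ⊕ (α × Nat1Inf × Nat1Inf))) =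
      n₀ + n₁ := by
  refine le_antisymm (treeSize_le_iff.2 fun _ _ _ h => ?_)
    (add_le_treeSize (LowerSet.mem_Iic_iff.2 le_rfl))
  simp only [LowerSet.mem_Iic_iff, Sum.inr_le_inr_iff, Prod.mk_le_mk] at h
  exact add_le_add h.2.1 h.2.2

theorem mem_treeDest_iff {x : Nat1Inf} {s : PUnit ⊕ (α × Nat1Inf × Nat1Inf)} :
    s ∈ treeDest x ↔ treeCons (LowerSet.Iic s) ≤ x := by
  refine ⟨fun hs => ?_, fun h => LowerSet.mem_sSup_iff.2 ⟨_, h, LowerSet.mem_Iic_iff.2 le_rfl⟩⟩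
  obtain ⟨X, hX, hsX⟩ := LowerSet.mem_sSup_iff.1 hs
  exact (treeCons_mono (LowerSet.Iic_le.2 hsX)).trans hX

end

theorem stmt_11 {α : Type*} [Preorder α] :
    ∀ x : Nat1Inf,
      (treeDest (α := α) x : Set (PUnit ⊕ (α × Nat1Inf × Nat1Inf))) =
        {s | ∃ u : PUnit, s = Sum.inl u} ∪
        {s | ∃ (a : α) (n₀ n₁ : Nat1Inf),
          s = Sum.inr (a, n₀, n₁) ∧
          1 + (n₀ : WithTop ℕ) + (n₁ : WithTop ℕ) ≤ (x : WithTop ℕ)} := by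
  intro x
  ext s
  rw [SetLike.mem_coe, mem_treeDest_iff, ← Subtype.coe_le_coe]
  rcases s with u | ⟨a, n₀, n₁⟩
  · simpa [treeCons, treeSize_Iic_inl] using x.2
  · simp [treeCons, treeSize_Iic_inr, add_assoc]
end
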